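/- arXiv:1912.07279 — 3 statements merged into one kernel-verified Lean document; each statement's English description precedes it below -/
import Mathlib

section
/- (Schur's theorem on multipliers.) Let 𝒜 be an S-ring over a finite abelian group G, X a basic set of 𝒜, and m an integer coprime to |G|. Then X^{(m)} = {x^m : x ∈ X} is again a basic set of 𝒜; in other words, the automorphism σ_m : g ↦ g^m of G is a Cayley isomorphism from 𝒜 to itself. -/
open scoped Pointwise

/-- The number of representations of `z` as `x * y` with `x ∈ X`, `y ∈ Y`
(used for the structure constants of an S-ring). -/
def structConst {G : Type*} [Group G] [DecidableEq G] (X Y : Finset G) (z : G) : ℕ :=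
  ((X ×ˢ Y).filter (fun q => q.1 * q.2 = z)).card

/-- An S-ring (Schur ring) over a finite group `G`, given by its partition into basic sets:
the partition contains `{1}`, is closed under inversion, and the products of the
characteristic sums of two blocks are integral linear combinations of characteristic sums,
i.e. the number of representations `z = x * y` (`x ∈ X`, `y ∈ Y`) is constant for `z`
ranging over a block `Z`. -/
structure SRing (G : Type*) [Group G] [Fintype G] [DecidableEq G] where
  basicSets : Finset (Finset G)
  nonempty_mem : ∀ X ∈ basicSets, X.Nonempty
  exists_mem : ∀ g : G, ∃ X ∈ basicSets, g ∈ X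
  disj : ∀ X ∈ basicSets, ∀ Y ∈ basicSets, X ≠ Y → Disjoint X Y
  one_mem : ({1} : Finset G) ∈ basicSets
  inv_mem : ∀ X ∈ basicSets, X.image (fun x => x⁻¹) ∈ basicSets
  structConst_eq : ∀ X ∈ basicSets, ∀ Y ∈ basicSets, ∀ Z ∈ basicSets,
    ∀ z ∈ Z, ∀ z' ∈ Z, structConst X Y z = structConst X Y z'

namespace SRing

variable {G G' : Type*} [Group G] [Fintype G] [DecidableEq G]
  [Group G'] [Fintype G'] [DecidableEq G']

/-- An algebraic isomorphism between S-rings: a bijection between the sets of basic sets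
preserving the structure constants. -/
def IsAlgIso (A : SRing G) (B : SRing G') (φ : Finset G → Finset G') : Prop :=
  Set.BijOn φ (A.basicSets : Set (Finset G)) (B.basicSets : Set (Finset G')) ∧
  ∀ X ∈ A.basicSets, ∀ Y ∈ A.basicSets, ∀ Z ∈ A.basicSets,
    ∀ z ∈ Z, ∀ z' ∈ φ Z, structConst X Y z = structConst (φ X) (φ Y) z'

/-- `φ` is induced by the bijection `f : G → G'` if `R(X)^f = R(X^φ)` for every basic set `X`,
where `R(X) = {(g, xg) : x ∈ X, g ∈ G}`; equivalently (for bijective `f`),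
`h * g⁻¹ ∈ X ↔ f h * (f g)⁻¹ ∈ φ X` for all `g h`. -/
def Induces (A : SRing G) (B : SRing G') (φ : Finset G → Finset G') (f : G → G') : Prop :=
  Function.Bijective f ∧
  ∀ X ∈ A.basicSets, ∀ g h : G, h * g⁻¹ ∈ X ↔ f h * (f g)⁻¹ ∈ φ X

/-- Separability with respect to the class of all finite abelian groups. -/
def SeparableA (A : SRing G) : Prop :=
  ∀ (H : Type) [CommGroup H] [Fintype H] [DecidableEq H],
    ∀ (B : SRing H) (φ : Finset G → Finset H),
      A.IsAlgIso B φ → ∃ f : G → H, A.Induces B φ f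

/-- `X` is an `A`-set: a union of basic sets of `A`. -/
def IsASet (A : SRing G) (X : Finset G) : Prop :=
  ∀ Y ∈ A.basicSets, (Y ∩ X).Nonempty → Y ⊆ X

end SRing


/-! For a prime `p ∤ |G|`, Frobenius in `𝔽_p[G]` gives `X̲ ^ p = (X^{(p)})̲`, and the coefficients
of `X̲ ^ p` are constant on basic sets because `𝒜 ⊗ 𝔽_p` is closed under multiplication; so
`X^{(p)}` is a union of basic sets. Composing primes, `g ↦ g ^ m` maps unions of basic sets
to unions of basic sets for every `m` coprime to `|G|`, and so does its inverse `g ↦ g ^ a`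
with `a m ≡ 1 (mod |G|)`; a bijection with this property maps basic sets to basic sets. -/

open Finset

/-- The element `X̲` of the group algebra `R[G]`. -/
noncomputable def charSum {G : Type*} (R : Type*) [Semiring R] (X : Finset G) :
    MonoidAlgebra R G :=
  ∑ x ∈ X, MonoidAlgebra.single x 1

section charSum

variable {G R : Type*} [Semiring R]

theorem coeff_charSum [DecidableEq G] (X : Finset G) (g : G) :
    (charSum R X).coeff g = if g ∈ X then 1 else 0 := by
  simp only [charSum, MonoidAlgebra.coeff_sum, Finsupp.finsetSum_apply,
    MonoidAlgebra.coeff_single, Finsupp.single_apply, sum_ite_eq']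

theorem charSum_singleton_one [One G] : charSum R ({1} : Finset G) = 1 := by
  rw [charSum, sum_singleton, MonoidAlgebra.one_def]

theorem coeff_charSum_mul [Group G] (X : Finset G) (b : MonoidAlgebra R G) (g : G) :
    (charSum R X * b).coeff g = ∑ x ∈ X, b.coeff (x⁻¹ * g) := by
  simp only [charSum, sum_mul, MonoidAlgebra.coeff_sum, Finsupp.finsetSum_apply,
    MonoidAlgebra.coeff_single_mul_apply, one_mul]

theorem charSum_pow_char {R : Type*} [CommRing R] [CommGroup G] [DecidableEq G] [Fintype G]
    (p : ℕ) [Fact p.Prime] [CharP R p] (hp : p.Coprime (Fintype.card G)) (X : Finset G) :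
    charSum R X ^ p = charSum R (X.image (· ^ p)) := by
  have : CharP (MonoidAlgebra R G) p := charP_of_injective_algebraMap' R p
  have hinj : Function.Injective (· ^ p : G → G) :=
    (powCoprime (n := p) (by rwa [Nat.card_eq_fintype_card, Nat.coprime_comm])).injective
  rw [charSum, sum_pow_char, charSum, sum_image hinj.injOn]
  simp only [MonoidAlgebra.single_pow, one_pow]

end charSum

theorem structConst_eq_card_filter {G : Type*} [Group G] [DecidableEq G] (X Y : Finset G)
    (g : G) : structConst X Y g = #{x ∈ X | x⁻¹ * g ∈ Y} := by
  refine card_bij' (fun q _ => q.1) (fun x _ => (x, x⁻¹ * g)) ?_ ?_ ?_ ?_ <;>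
    simp +contextual [Prod.ext_iff, ← eq_inv_mul_iff_mul_eq]
  rintro x _ - hy rfl
  exact hy

theorem zpow_zpow_eq_self_of_mul_add_mul_card_eq_one {G : Type*} [Group G] [Fintype G]
    {a b m : ℤ} (h : a * m + b * Fintype.card G = 1) (x : G) : (x ^ m) ^ a = x :=
  calc (x ^ m) ^ a = x ^ (a * m) * (x ^ Fintype.card G) ^ b := by
        rw [pow_card_eq_one, one_zpow, mul_one, ← zpow_mul, mul_comm]
    _ = x := by rw [← zpow_natCast, ← zpow_mul, ← zpow_add, mul_comm _ b, h, zpow_one]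

namespace SRing

section Group

variable {G : Type*} [Group G] [Fintype G] [DecidableEq G] {A : SRing G}

variable (A) in
def IsConstOnBasicSets {R : Type*} (f : G → R) : Prop :=
  ∀ Z ∈ A.basicSets, ∀ z ∈ Z, ∀ z' ∈ Z, f z = f z'

variable (A) in
def PreservesASets (f : G → G) : Prop :=
  ∀ S, A.IsASet S → A.IsASet (S.image f)

theorem eq_of_mem_of_mem {Y Z : Finset G} (hY : Y ∈ A.basicSets) (hZ : Z ∈ A.basicSets)
    {g : G} (hgY : g ∈ Y) (hgZ : g ∈ Z) : Y = Z := by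
  by_contra h
  exact disjoint_left.mp (A.disj Y hY Z hZ h) hgY hgZ

variable (A) in
noncomputable def basicSetOf (g : G) : Finset G := (A.exists_mem g).choose

theorem basicSetOf_mem (g : G) : A.basicSetOf g ∈ A.basicSets :=
  (A.exists_mem g).choose_spec.1

theorem mem_basicSetOf (g : G) : g ∈ A.basicSetOf g :=
  (A.exists_mem g).choose_spec.2

theorem basicSetOf_eq {Y : Finset G} (hY : Y ∈ A.basicSets) {g : G} (hg : g ∈ Y) :
    A.basicSetOf g = Y :=
  eq_of_mem_of_mem (basicSetOf_mem g) hY (mem_basicSetOf g) hg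

theorem isASet_of_mem_basicSets {X : Finset G} (hX : X ∈ A.basicSets) : A.IsASet X := by
  rintro Y hY ⟨g, hg⟩
  rw [eq_of_mem_of_mem hY hX (mem_inter.mp hg).1 (mem_inter.mp hg).2]

theorem IsASet.isConstOnBasicSets_indicator {R : Type*} [Zero R] [One R] {S : Finset G}
    (hS : A.IsASet S) : A.IsConstOnBasicSets (fun g => if g ∈ S then (1 : R) else 0) := by
  intro Z hZ z hz z' hz'
  by_cases hzS : z ∈ S
  · simp only [if_pos hzS, if_pos (hS Z hZ ⟨z, mem_inter.mpr ⟨hz, hzS⟩⟩ hz')]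
  · have hz'S : z' ∉ S := fun hz'S => hzS (hS Z hZ ⟨z', mem_inter.mpr ⟨hz', hz'S⟩⟩ hz)
    simp only [if_neg hzS, if_neg hz'S]

theorem isASet_of_isConstOnBasicSets_indicator {R : Type*} [Zero R] [One R] [NeZero (1 : R)]
    {S : Finset G} (h : A.IsConstOnBasicSets (fun g => if g ∈ S then (1 : R) else 0)) :
    A.IsASet S := by
  rintro Y hY ⟨g, hg⟩ y hy
  obtain ⟨hgY, hgS⟩ := mem_inter.mp hg
  have hyg := h Y hY y hy g hgY
  by_contra hyS
  simp [hyS, hgS] at hyg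

theorem IsConstOnBasicSets.sum_filter_basicSetOf_eq {R : Type*} [AddCommMonoid R] {f : G → R}
    (hf : A.IsConstOnBasicSets f) (X : Finset G) {Y : Finset G} (hY : Y ∈ A.basicSets)
    {y : G} (hy : y ∈ Y) (g : G) :
    ∑ x ∈ X with A.basicSetOf (x⁻¹ * g) = Y, f (x⁻¹ * g) = structConst X Y g • f y := by
  have hfilter : {x ∈ X | A.basicSetOf (x⁻¹ * g) = Y} = {x ∈ X | x⁻¹ * g ∈ Y} :=
    filter_congr fun x _ => ⟨fun h => h ▸ mem_basicSetOf _, basicSetOf_eq hY⟩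
  rw [hfilter, structConst_eq_card_filter, ← sum_const]
  exact sum_congr rfl fun x hx => hf Y hY _ (mem_filter.mp hx).2 y hy

/-- The coefficientwise form of `X̲ * a ∈ 𝒜` for `a ∈ 𝒜`. -/
theorem IsConstOnBasicSets.sum_inv_mul {R : Type*} [AddCommMonoid R] {f : G → R}
    (hf : A.IsConstOnBasicSets f) {X : Finset G} (hX : X ∈ A.basicSets) :
    A.IsConstOnBasicSets (fun g => ∑ x ∈ X, f (x⁻¹ * g)) := by
  intro Z hZ z hz z' hz'
  dsimp only
  rw [← sum_fiberwise_of_maps_to (fun x _ => basicSetOf_mem (x⁻¹ * z)),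
    ← sum_fiberwise_of_maps_to (fun x _ => basicSetOf_mem (x⁻¹ * z'))]
  refine sum_congr rfl fun Y hY => ?_
  obtain ⟨y, hy⟩ := A.nonempty_mem Y hY
  rw [hf.sum_filter_basicSetOf_eq X hY hy, hf.sum_filter_basicSetOf_eq X hY hy,
    A.structConst_eq X hX Y hY Z hZ z hz z' hz']

theorem isConstOnBasicSets_coeff_charSum_pow (R : Type*) [Semiring R] {X : Finset G}
    (hX : X ∈ A.basicSets) (k : ℕ) : A.IsConstOnBasicSets (charSum R X ^ k).coeff := by
  induction k with
  | zero =>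
    have hone : (charSum R X ^ 0).coeff = fun g => if g ∈ ({1} : Finset G) then (1 : R) else 0 :=
      funext fun g => by rw [pow_zero, ← charSum_singleton_one, coeff_charSum]
    rw [hone]
    exact (isASet_of_mem_basicSets A.one_mem).isConstOnBasicSets_indicator
  | succ k ih =>
    have hsucc : (charSum R X ^ (k + 1)).coeff =
        fun g => ∑ x ∈ X, (charSum R X ^ k).coeff (x⁻¹ * g) :=
      funext fun g => by rw [pow_succ', coeff_charSum_mul]
    rw [hsucc]
    exact ih.sum_inv_mul hX

theorem preservesASets_of_forall_mem_basicSets {f : G → G}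
    (h : ∀ X ∈ A.basicSets, A.IsASet (X.image f)) : A.PreservesASets f := by
  rintro S hS Y hY ⟨_, hg⟩
  obtain ⟨hgY, hgS⟩ := mem_inter.mp hg
  obtain ⟨s, hs, rfl⟩ := mem_image.mp hgS
  have hsub : A.basicSetOf s ⊆ S :=
    hS _ (basicSetOf_mem s) ⟨s, mem_inter.mpr ⟨mem_basicSetOf s, hs⟩⟩
  have hY' : Y ⊆ (A.basicSetOf s).image f := h _ (basicSetOf_mem s) Y hY
    ⟨f s, mem_inter.mpr ⟨hgY, mem_image_of_mem f (mem_basicSetOf s)⟩⟩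
  exact hY'.trans (image_subset_image hsub)

theorem PreservesASets.comp {f g : G → G} (hg : A.PreservesASets g) (hf : A.PreservesASets f) :
    A.PreservesASets (g ∘ f) := fun S hS => by
  rw [← image_image]
  exact hg _ (hf S hS)

theorem PreservesASets.image_mem_basicSets {f g : G → G} (hf : A.PreservesASets f)
    (hg : A.PreservesASets g) (hgf : Function.LeftInverse g f) (hfg : Function.RightInverse g f)
    {X : Finset G} (hX : X ∈ A.basicSets) : X.image f ∈ A.basicSets := by
  obtain ⟨x, hx⟩ := A.nonempty_mem X hX
  set Z := A.basicSetOf (f x)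
  have hZX : Z ⊆ X.image f := hf X (isASet_of_mem_basicSets hX) Z (basicSetOf_mem _)
    ⟨f x, mem_inter.mpr ⟨mem_basicSetOf _, mem_image_of_mem f hx⟩⟩
  have hXZ : X ⊆ Z.image g := hg Z (isASet_of_mem_basicSets (basicSetOf_mem _)) X hX
    ⟨x, mem_inter.mpr ⟨hx, mem_image.mpr ⟨f x, mem_basicSetOf _, hgf x⟩⟩⟩
  have hXZ' : X.image f ⊆ Z :=
    calc X.image f ⊆ (Z.image g).image f := image_subset_image hXZ
      _ = Z := by rw [image_image, hfg.comp_eq_id, image_id]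
  rw [subset_antisymm hXZ' hZX]
  exact basicSetOf_mem _

end Group

section CommGroup

variable {G : Type*} [CommGroup G] [Fintype G] [DecidableEq G] {A : SRing G}

theorem isASet_image_pow_of_prime {p : ℕ} [Fact p.Prime] (hp : p.Coprime (Fintype.card G))
    {X : Finset G} (hX : X ∈ A.basicSets) : A.IsASet (X.image (· ^ p)) := by
  refine isASet_of_isConstOnBasicSets_indicator (R := ZMod p) ?_
  have h := isConstOnBasicSets_coeff_charSum_pow (ZMod p) hX p
  rwa [charSum_pow_char p hp, funext (coeff_charSum _)] at h

theorem preservesASets_pow {n : ℕ} (hn : n.Coprime (Fintype.card G)) :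
    A.PreservesASets (· ^ n) := by
  induction n using induction_on_primes with
  | zero =>
    have : Subsingleton G :=
      Fintype.card_le_one_iff_subsingleton.mp (Nat.coprime_zero_left _ |>.mp hn).le
    rw [show (· ^ 0 : G → G) = id from funext fun _ => Subsingleton.elim _ _]
    intro S hS
    rwa [image_id]
  | one =>
    intro S hS
    simpa using hS
  | prime_mul p a hp ih =>
    have : Fact p.Prime := ⟨hp⟩
    obtain ⟨hpG, haG⟩ := Nat.coprime_mul_iff_left.mp hn
    rw [show (· ^ (p * a) : G → G) = (· ^ a) ∘ (· ^ p) from funext fun x => pow_mul x p a]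
    exact (ih haG).comp
      (preservesASets_of_forall_mem_basicSets fun X hX => isASet_image_pow_of_prime hpG hX)

theorem preservesASets_zpow {m : ℤ} (hm : IsCoprime m (Fintype.card G)) :
    A.PreservesASets (· ^ m) := by
  set k := (m % Fintype.card G).toNat
  have hk : (k : ℤ) = m % Fintype.card G :=
    Int.toNat_of_nonneg (Int.emod_nonneg m (by exact_mod_cast Fintype.card_ne_zero))
  have hkG : k.Coprime (Fintype.card G) := by
    rwa [← Nat.isCoprime_iff_coprime, hk, Int.isCoprime_iff_gcd_eq_one, Int.gcd_emod,
      ← Int.isCoprime_iff_gcd_eq_one]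
  rw [show (· ^ m : G → G) = (· ^ k) from
    funext fun x => by rw [← zpow_natCast, hk, zpow_mod_card]]
  exact preservesASets_pow hkG

end CommGroup

end SRing

/-- Schur's theorem on multipliers: for an S-ring over a finite abelian group `G`,
a basic set `X`, and `m` coprime to `|G|`, the set `X^(m) = {x^m : x ∈ X}` is again
a basic set. -/
theorem stmt5 (G : Type) [CommGroup G] [Fintype G] [DecidableEq G] (A : SRing G)
    (X : Finset G) (hX : X ∈ A.basicSets) (m : ℤ)
    (hm : IsCoprime m (Fintype.card G : ℤ)) :
    X.image (fun x => x ^ m) ∈ A.basicSets := by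
  obtain ⟨a, b, hab⟩ := id hm
  have ha : IsCoprime a (Fintype.card G : ℤ) := ⟨m, b, by rw [← hab]; ring⟩
  have hba : m * a + b * Fintype.card G = 1 := by rw [← hab]; ring
  exact (SRing.preservesASets_zpow hm).image_mem_basicSets (SRing.preservesASets_zpow ha)
    (zpow_zpow_eq_self_of_mul_add_mul_card_eq_one hab)
    (zpow_zpow_eq_self_of_mul_add_mul_card_eq_one hba) hX
end

section
/- Let 𝒜 and 𝒜' be S-rings over finite groups G and G', let ξ ∈ ℤG and ξ' ∈ ℤG', let ℬ be the smallest S-ring over G containing 𝒜 and ξ, and ℬ' the smallest S-ring over G' containing 𝒜' and ξ'. Then for every algebraic isomorphism φ : 𝒜 → 𝒜' there is at most one algebraic isomorphism ψ : ℬ → ℬ' such that ψ extends φ (i.e. the ℤ-linear ring isomorphism ℬ → ℬ' determined by ψ via X̲ ↦ (X^ψ)̲ agrees on 𝒜 with the one determined by φ) and the linear extension of ψ maps ξ to ξ'. -/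
open scoped Pointwise

namespace SRing

variable {G G' : Type*} [Group G] [Fintype G] [DecidableEq G]
  [Group G'] [Fintype G'] [DecidableEq G']

/-- `A ⊆ B` as rings: every basic set of `A` is a union of basic sets of `B`. -/
def SubringOf (A B : SRing G) : Prop := ∀ X ∈ A.basicSets, B.IsASet X

/-- The element of `ℤG` with coefficient function `ξ` belongs to the S-ring `B`,
i.e. `ξ` is constant on every basic set of `B`. -/
def MemFun (B : SRing G) (ξ : G → ℤ) : Prop :=
  ∀ Y ∈ B.basicSets, ∀ y ∈ Y, ∀ y' ∈ Y, ξ y = ξ y'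

/-- `ψ` (defined on the basic sets of `B ⊇ A`) extends `φ` (defined on the basic sets of `A`):
the induced linear ring isomorphisms agree on `A`, i.e. for every basic set `X` of `A`,
`φ X` is the (disjoint) union of the sets `ψ Y` over the basic sets `Y ⊆ X` of `B`. -/
def ExtendsOn (A B : SRing G) (φ ψ : Finset G → Finset G') : Prop :=
  ∀ X ∈ A.basicSets, φ X = (B.basicSets.filter (fun Y => Y ⊆ X)).biUnion ψ

/-- The linear extension of `ψ` maps the element with coefficient function `ξ` to the one
with coefficient function `ξ'`. -/
def MapsElem (B : SRing G) (ψ : Finset G → Finset G') (ξ : G → ℤ) (ξ' : G' → ℤ) : Prop :=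
  ∀ Y ∈ B.basicSets, ∀ y ∈ Y, ∀ y' ∈ ψ Y, ξ y = ξ' y'

end SRing

/-! If `ψ₁` and `ψ₂` both extend `φ` and send `ξ` to `ξ'`, then `σ = ψ₂⁻¹ ∘ ψ₁` is an algebraic
automorphism of `B` that permutes the basic sets of `B` inside each basic set of `A` and
preserves `ξ`. Fusing the basic sets of `B` along the orbits of `σ` gives an S-ring which still
contains `A` and `ξ`, hence contains `B` by minimality; so every orbit is a single basic set,
i.e. `σ` is the identity. -/

open Finset

section StructConst

variable {G : Type*} [Group G] [DecidableEq G]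

theorem structConst_eq_sum (X Y : Finset G) (z : G) :
    structConst X Y z = ∑ x ∈ X, ∑ y ∈ Y, if x * y = z then 1 else 0 := by
  rw [structConst, card_filter, sum_product]

theorem structConst_pos {X Y : Finset G} {z : G} :
    0 < structConst X Y z ↔ ∃ x ∈ X, ∃ y ∈ Y, x * y = z := by
  simp [structConst, card_pos, filter_nonempty_iff, and_assoc]

theorem structConst_one_left (Y : Finset G) (z : G) :
    structConst {1} Y z = if z ∈ Y then 1 else 0 := by
  simp only [structConst_eq_sum, sum_singleton, one_mul, sum_ite_eq']

theorem structConst_one_right (X : Finset G) (z : G) :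
    structConst X {1} z = if z ∈ X then 1 else 0 := by
  simp only [structConst_eq_sum, sum_singleton, mul_one, sum_ite_eq']

end StructConst

namespace SRing

variable {G G' G'' : Type*} [Group G] [Fintype G] [DecidableEq G]
  [Group G'] [Fintype G'] [DecidableEq G'] [Group G''] [Fintype G''] [DecidableEq G'']

theorem eq_of_mem_of_mem_s7 {B : SRing G} {X Y : Finset G} (hX : X ∈ B.basicSets)
    (hY : Y ∈ B.basicSets) {g : G} (hgX : g ∈ X) (hgY : g ∈ Y) : X = Y := by
  by_contra h
  exact disjoint_left.mp (B.disj X hX Y hY h) hgX hgY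

theorem IsASet.mem_iff_subset {B : SRing G} {K U : Finset G} (hK : B.IsASet K)
    (hU : U ∈ B.basicSets) {u : G} (hu : u ∈ U) : u ∈ K ↔ U ⊆ K :=
  ⟨fun h => hK U hU ⟨u, mem_inter.mpr ⟨hu, h⟩⟩, fun h => h hu⟩

theorem eq_singleton_one_iff {B : SRing G} {U : Finset G} (hU : U ∈ B.basicSets) {u : G}
    (hu : u ∈ U) : U = {1} ↔ u = 1 :=
  ⟨fun h => mem_singleton.mp (h ▸ hu),
    fun h => eq_of_mem_of_mem_s7 hU B.one_mem hu (mem_singleton.mpr h)⟩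

theorem sum_eq_sum_basicSets {M : Type*} [AddCommMonoid M] {B : SRing G} {K : Finset G}
    (hK : B.IsASet K) (f : G → M) :
    ∑ x ∈ K, f x = ∑ U ∈ B.basicSets.filter (· ⊆ K), ∑ x ∈ U, f x := by
  have hK_eq : (B.basicSets.filter (· ⊆ K)).biUnion id = K := by
    ext g
    simp only [mem_biUnion, mem_filter, id]
    refine ⟨fun ⟨U, ⟨_, hUK⟩, hg⟩ => hUK hg, fun hg => ?_⟩
    obtain ⟨U, hU, hgU⟩ := B.exists_mem g
    exact ⟨U, ⟨hU, hK U hU ⟨g, mem_inter.mpr ⟨hgU, hg⟩⟩⟩, hgU⟩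
  conv_lhs => rw [← hK_eq]
  refine sum_biUnion fun U hU V hV hUV => B.disj U ?_ V ?_ hUV
  · exact (mem_filter.mp hU).1
  · exact (mem_filter.mp hV).1

theorem structConst_eq_sum_basicSets {B : SRing G} {K L : Finset G} (hK : B.IsASet K)
    (hL : B.IsASet L) (z : G) :
    structConst K L z = ∑ U ∈ B.basicSets.filter (· ⊆ K),
      ∑ V ∈ B.basicSets.filter (· ⊆ L), structConst U V z := by
  simp only [structConst_eq_sum, sum_eq_sum_basicSets hK, sum_eq_sum_basicSets hL]
  exact sum_congr rfl fun U _ => sum_comm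

namespace IsAlgIso

variable {B : SRing G} {B' : SRing G'} {ψ : Finset G → Finset G'}

theorem mapsTo (h : B.IsAlgIso B' ψ) {X : Finset G} (hX : X ∈ B.basicSets) :
    ψ X ∈ B'.basicSets :=
  h.1.mapsTo hX

theorem exists_eq (h : B.IsAlgIso B' ψ) {X' : Finset G'} (hX' : X' ∈ B'.basicSets) :
    ∃ X ∈ B.basicSets, ψ X = X' :=
  h.1.surjOn hX'

theorem map_one (h : B.IsAlgIso B' ψ) : ψ {1} = {1} := by
  obtain ⟨Y, hY, hψY⟩ := h.exists_eq B'.one_mem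
  obtain ⟨y, hy⟩ := B.nonempty_mem Y hY
  have hc := h.2 _ B.one_mem _ hY _ hY y hy 1 (hψY ▸ mem_singleton_self 1)
  rw [hψY, structConst_one_left, structConst_one_right, if_pos hy] at hc
  have h1 : (1 : G') ∈ ψ {1} := by
    by_contra h1
    rw [if_neg h1] at hc
    exact one_ne_zero hc
  exact eq_of_mem_of_mem_s7 (h.mapsTo B.one_mem) B'.one_mem h1 (mem_singleton_self 1)

theorem map_eq_singleton_one_iff (h : B.IsAlgIso B' ψ) {X : Finset G} (hX : X ∈ B.basicSets) :
    ψ X = {1} ↔ X = {1} :=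
  ⟨fun hψX => h.1.injOn hX B.one_mem (hψX.trans h.map_one.symm), fun hX1 => hX1 ▸ h.map_one⟩

theorem map_inv (h : B.IsAlgIso B' ψ) {X : Finset G} (hX : X ∈ B.basicSets) :
    ψ (X.image (·⁻¹)) = (ψ X).image (·⁻¹) := by
  have hXinv := B.inv_mem X hX
  obtain ⟨x, hx⟩ := B.nonempty_mem X hX
  have hpos : 0 < structConst X (X.image (·⁻¹)) 1 :=
    structConst_pos.mpr ⟨x, hx, x⁻¹, mem_image_of_mem _ hx, mul_inv_cancel x⟩
  rw [h.2 _ hX _ hXinv _ B.one_mem 1 (mem_singleton_self 1) 1 (h.map_one ▸ mem_singleton_self 1),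
    structConst_pos] at hpos
  obtain ⟨a, ha, b, hb, hab⟩ := hpos
  rw [← inv_eq_of_mul_eq_one_right hab] at hb
  exact eq_of_mem_of_mem_s7 (h.mapsTo hXinv) (B'.inv_mem _ (h.mapsTo hX)) hb
    (mem_image_of_mem _ ha)

theorem comp {B'' : SRing G''} {χ : Finset G' → Finset G''} (h : B.IsAlgIso B' ψ)
    (h' : B'.IsAlgIso B'' χ) : B.IsAlgIso B'' (χ ∘ ψ) := by
  refine ⟨h'.1.comp h.1, fun X hX Y hY Z hZ z hz z'' hz'' => ?_⟩
  obtain ⟨z', hz'⟩ := B'.nonempty_mem _ (h.mapsTo hZ)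
  exact (h.2 X hX Y hY Z hZ z hz z' hz').trans
    (h'.2 _ (h.mapsTo hX) _ (h.mapsTo hY) _ (h.mapsTo hZ) z' hz' z'' hz'')

theorem symm (h : B.IsAlgIso B' ψ) :
    B'.IsAlgIso B (Function.invFunOn ψ (B.basicSets : Set (Finset G))) := by
  have hinv := h.1.invOn_invFunOn
  have hbij := h.1.symm hinv.symm
  refine ⟨hbij, fun X' hX' Y' hY' Z' hZ' z' hz' z hz => ?_⟩
  have hc := h.2 _ (hbij.mapsTo hX') _ (hbij.mapsTo hY') _ (hbij.mapsTo hZ') z hz z'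
    (by rwa [hinv.2 hZ'])
  rwa [hinv.2 hX', hinv.2 hY', eq_comm] at hc

theorem sum_filter_comp {M : Type*} [AddCommMonoid M] {σ : Finset G → Finset G}
    (hσ : B.IsAlgIso B σ) {p : Finset G → Prop} [DecidablePred p]
    (hp : ∀ U ∈ B.basicSets, p (σ U) ↔ p U) (f : Finset G → M) :
    ∑ U ∈ B.basicSets.filter p, f (σ U) = ∑ U ∈ B.basicSets.filter p, f U := by
  refine sum_nbij σ (fun U hU => ?_) (hσ.1.injOn.mono fun U hU => (mem_filter.mp hU).1)
    (fun V hV => ?_) fun _ _ => rfl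
  · obtain ⟨hUB, hpU⟩ := mem_filter.mp hU
    exact mem_filter.mpr ⟨hσ.mapsTo hUB, (hp U hUB).mpr hpU⟩
  · obtain ⟨hVB, hpV⟩ := mem_filter.mp (mem_coe.mp hV)
    obtain ⟨U, hU, rfl⟩ := hσ.exists_eq hVB
    exact ⟨U, mem_filter.mpr ⟨hU, (hp U hU).mp hpV⟩, rfl⟩

end IsAlgIso

theorem ExtendsOn.subset_iff {A B : SRing G} {B' : SRing G'} {φ ψ : Finset G → Finset G'}
    (hext : ExtendsOn A B φ ψ) (hψ : B.IsAlgIso B' ψ) {X Y : Finset G} (hX : X ∈ A.basicSets)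
    (hY : Y ∈ B.basicSets) : Y ⊆ X ↔ ψ Y ⊆ φ X := by
  rw [hext X hX]
  refine ⟨fun hYX => subset_biUnion_of_mem ψ (mem_filter.mpr ⟨hY, hYX⟩), fun hψY => ?_⟩
  obtain ⟨w, hw⟩ := B'.nonempty_mem _ (hψ.mapsTo hY)
  obtain ⟨V, hV, hwV⟩ := mem_biUnion.mp (hψY hw)
  obtain ⟨hVB, hVX⟩ := mem_filter.mp hV
  rwa [hψ.1.injOn hY hVB (eq_of_mem_of_mem_s7 (hψ.mapsTo hY) (hψ.mapsTo hVB) hw hwV)]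

section OrbitFusion

variable {B : SRing G} {σ : Finset G → Finset G}

/-- The classes of the equivalence closure are the unions of the `σ`-orbits of basic sets. -/
def OrbitStep (B : SRing G) (σ : Finset G → Finset G) (u v : G) : Prop :=
  ∃ U ∈ B.basicSets, u ∈ U ∧ (v ∈ U ∨ v ∈ σ U)

open Classical in
noncomputable def orbitClass (B : SRing G) (σ : Finset G → Finset G) (u : G) : Finset G :=
  univ.filter (Relation.EqvGen (OrbitStep B σ) u)

theorem mem_orbitClass {u v : G} :
    v ∈ orbitClass B σ u ↔ Relation.EqvGen (OrbitStep B σ) u v := by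
  simp [orbitClass]

theorem self_mem_orbitClass (u : G) : u ∈ orbitClass B σ u :=
  mem_orbitClass.mpr (.refl u)

theorem orbitClass_eq_of_mem {u v : G} (h : v ∈ orbitClass B σ u) :
    orbitClass B σ v = orbitClass B σ u := by
  ext w
  simp only [mem_orbitClass] at h ⊢
  exact ⟨fun hw => .trans _ _ _ h hw, fun hw => .trans _ _ _ (.symm _ _ h) hw⟩

theorem apply_eq_of_mem_orbitClass {β : Sort*} (f : G → β)
    (hf : ∀ u v, OrbitStep B σ u v → f u = f v) {c u v : G} (hu : u ∈ orbitClass B σ c)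
    (hv : v ∈ orbitClass B σ c) : f u = f v :=
  (congrArg (Quot.lift f hf) (Quot.eqvGen_sound (mem_orbitClass.mp hu))).symm.trans
    (congrArg (Quot.lift f hf) (Quot.eqvGen_sound (mem_orbitClass.mp hv)))

theorem mem_orbitClass_iff_of_orbitStep {c u v : G} (h : OrbitStep B σ u v) :
    u ∈ orbitClass B σ c ↔ v ∈ orbitClass B σ c := by
  simp only [mem_orbitClass]
  exact ⟨fun hu => .trans _ _ _ hu (.rel _ _ h),
    fun hv => .trans _ _ _ hv (.symm _ _ (.rel _ _ h))⟩

theorem isASet_orbitClass (c : G) : B.IsASet (orbitClass B σ c) := by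
  rintro U hU ⟨w, hw⟩ x hx
  obtain ⟨hwU, hwc⟩ := mem_inter.mp hw
  exact (mem_orbitClass_iff_of_orbitStep ⟨U, hU, hwU, .inl hx⟩).mp hwc

variable (hσ : B.IsAlgIso B σ)
include hσ

theorem comp_subset_orbitClass_iff {U : Finset G} (hU : U ∈ B.basicSets) (c : G) :
    σ U ⊆ orbitClass B σ c ↔ U ⊆ orbitClass B σ c := by
  obtain ⟨x, hx⟩ := B.nonempty_mem U hU
  obtain ⟨y, hy⟩ := B.nonempty_mem _ (hσ.mapsTo hU)
  rw [← (isASet_orbitClass c).mem_iff_subset hU hx,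
    ← (isASet_orbitClass c).mem_iff_subset (hσ.mapsTo hU) hy]
  exact (mem_orbitClass_iff_of_orbitStep ⟨U, hU, hx, .inr hy⟩).symm

theorem mem_iff_of_orbitStep {K : Finset G} (hK : B.IsASet K)
    (hKσ : ∀ U ∈ B.basicSets, σ U ⊆ K ↔ U ⊆ K) {u v : G} (h : OrbitStep B σ u v) :
    u ∈ K ↔ v ∈ K := by
  obtain ⟨U, hU, hu, hv | hv⟩ := h
  · rw [hK.mem_iff_subset hU hu, hK.mem_iff_subset hU hv]
  · rw [hK.mem_iff_subset hU hu, hK.mem_iff_subset (hσ.mapsTo hU) hv, hKσ U hU]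

theorem orbitClass_one : orbitClass B σ 1 = {1} := by
  have hstep : ∀ u v, OrbitStep B σ u v → (u = 1) = (v = 1) := by
    rintro u v ⟨U, hU, hu, hv | hv⟩ <;> refine propext ?_
    · rw [← eq_singleton_one_iff hU hu, ← eq_singleton_one_iff hU hv]
    · rw [← eq_singleton_one_iff hU hu, ← eq_singleton_one_iff (hσ.mapsTo hU) hv,
        hσ.map_eq_singleton_one_iff hU]
  ext v
  rw [mem_singleton]
  refine ⟨fun hv => ?_, by rintro rfl; exact self_mem_orbitClass 1⟩
  exact (apply_eq_of_mem_orbitClass (· = 1) hstep hv (self_mem_orbitClass (1 : G))).mpr rfl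

theorem orbitStep_inv {u v : G} (h : OrbitStep B σ u v) : OrbitStep B σ u⁻¹ v⁻¹ := by
  obtain ⟨U, hU, hu, hv⟩ := h
  refine ⟨U.image (·⁻¹), B.inv_mem U hU, mem_image_of_mem _ hu, ?_⟩
  rw [hσ.map_inv hU]
  exact hv.imp (mem_image_of_mem _) (mem_image_of_mem _)

theorem image_inv_orbitClass (c : G) :
    (orbitClass B σ c).image (·⁻¹) = orbitClass B σ c⁻¹ := by
  have hinv : ∀ {c u v : G}, u ∈ orbitClass B σ c → v ∈ orbitClass B σ c →
      orbitClass B σ u⁻¹ = orbitClass B σ v⁻¹ :=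
    apply_eq_of_mem_orbitClass (fun w => orbitClass B σ w⁻¹) fun u v h =>
      orbitClass_eq_of_mem (mem_orbitClass.mpr (.symm _ _ (.rel _ _ (orbitStep_inv hσ h))))
  ext w
  rw [mem_image]
  constructor
  · rintro ⟨a, ha, rfl⟩
    exact hinv ha (self_mem_orbitClass c) ▸ self_mem_orbitClass a⁻¹
  · intro hw
    refine ⟨w⁻¹, ?_, inv_inv w⟩
    have hwc := hinv hw (self_mem_orbitClass c⁻¹)
    rw [inv_inv] at hwc
    exact hwc ▸ self_mem_orbitClass w⁻¹

theorem structConst_eq_of_orbitStep {K L : Finset G} (hK : B.IsASet K)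
    (hKσ : ∀ U ∈ B.basicSets, σ U ⊆ K ↔ U ⊆ K) (hL : B.IsASet L)
    (hLσ : ∀ U ∈ B.basicSets, σ U ⊆ L ↔ U ⊆ L) {u v : G} (h : OrbitStep B σ u v) :
    structConst K L u = structConst K L v := by
  obtain ⟨Z, hZ, hu, hv | hv⟩ := h
  all_goals rw [structConst_eq_sum_basicSets hK hL, structConst_eq_sum_basicSets hK hL]
  · exact sum_congr rfl fun X hX => sum_congr rfl fun Y hY =>
      B.structConst_eq X (mem_filter.mp hX).1 Y (mem_filter.mp hY).1 Z hZ u hu v hv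
  · calc _ = ∑ X ∈ B.basicSets.filter (· ⊆ K), ∑ Y ∈ B.basicSets.filter (· ⊆ L),
            structConst (σ X) (σ Y) v :=
          sum_congr rfl fun X hX => sum_congr rfl fun Y hY =>
            hσ.2 X (mem_filter.mp hX).1 Y (mem_filter.mp hY).1 Z hZ u hu v hv
      _ = ∑ X ∈ B.basicSets.filter (· ⊆ K), ∑ Y ∈ B.basicSets.filter (· ⊆ L),
            structConst (σ X) Y v :=
          sum_congr rfl fun X _ => hσ.sum_filter_comp hLσ fun Y => structConst (σ X) Y v
      _ = _ :=
          hσ.sum_filter_comp hKσ fun X => ∑ Y ∈ B.basicSets.filter (· ⊆ L), structConst X Y v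

noncomputable def orbitFusion : SRing G where
  basicSets := univ.image (orbitClass B σ)
  nonempty_mem := by
    rintro _ hW
    obtain ⟨u, -, rfl⟩ := mem_image.mp hW
    exact ⟨u, self_mem_orbitClass u⟩
  exists_mem g := ⟨_, mem_image_of_mem _ (mem_univ g), self_mem_orbitClass g⟩
  disj := by
    rintro _ hW _ hW' hne
    obtain ⟨a, -, rfl⟩ := mem_image.mp hW
    obtain ⟨b, -, rfl⟩ := mem_image.mp hW'
    refine disjoint_left.mpr fun w ha hb => hne ?_
    rw [← orbitClass_eq_of_mem ha, orbitClass_eq_of_mem hb]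
  one_mem := orbitClass_one hσ ▸ mem_image_of_mem _ (mem_univ 1)
  inv_mem := by
    rintro _ hW
    obtain ⟨a, -, rfl⟩ := mem_image.mp hW
    rw [image_inv_orbitClass hσ]
    exact mem_image_of_mem _ (mem_univ _)
  structConst_eq := by
    rintro _ hK _ hL _ hZ z hz z' hz'
    obtain ⟨a, -, rfl⟩ := mem_image.mp hK
    obtain ⟨b, -, rfl⟩ := mem_image.mp hL
    obtain ⟨c, -, rfl⟩ := mem_image.mp hZ
    refine apply_eq_of_mem_orbitClass _ (fun u v h => ?_) hz hz'
    exact structConst_eq_of_orbitStep hσ (isASet_orbitClass a)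
      (fun U hU => comp_subset_orbitClass_iff hσ hU a) (isASet_orbitClass b)
      (fun U hU => comp_subset_orbitClass_iff hσ hU b) h

theorem isASet_orbitFusion {K : Finset G} (hK : B.IsASet K)
    (hKσ : ∀ U ∈ B.basicSets, σ U ⊆ K ↔ U ⊆ K) : (orbitFusion hσ).IsASet K := by
  rintro _ hW ⟨w, hw⟩ v hv
  obtain ⟨c, -, rfl⟩ := mem_image.mp hW
  obtain ⟨hwc, hwK⟩ := mem_inter.mp hw
  exact (apply_eq_of_mem_orbitClass (· ∈ K)
    (fun u v h => propext (mem_iff_of_orbitStep hσ hK hKσ h)) hwc hv).mp hwK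

theorem memFun_orbitFusion {ξ : G → ℤ} (hξ : B.MemFun ξ)
    (hξσ : ∀ U ∈ B.basicSets, ∀ u ∈ U, ∀ v ∈ σ U, ξ u = ξ v) : (orbitFusion hσ).MemFun ξ := by
  rintro _ hW u hu v hv
  obtain ⟨c, -, rfl⟩ := mem_image.mp hW
  refine apply_eq_of_mem_orbitClass ξ ?_ hu hv
  rintro u v ⟨U, hU, hu, hv | hv⟩
  · exact hξ U hU u hu v hv
  · exact hξσ U hU u hu v hv

theorem eq_self_of_subringOf_orbitFusion (hBσ : B.SubringOf (orbitFusion hσ)) {Y : Finset G}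
    (hY : Y ∈ B.basicSets) : σ Y = Y := by
  obtain ⟨y, hy⟩ := B.nonempty_mem Y hY
  obtain ⟨v, hv⟩ := B.nonempty_mem _ (hσ.mapsTo hY)
  have hclass : orbitClass B σ y ⊆ Y :=
    hBσ Y hY _ (mem_image_of_mem _ (mem_univ y))
      ⟨y, mem_inter.mpr ⟨self_mem_orbitClass y, hy⟩⟩
  have hvy : v ∈ orbitClass B σ y := mem_orbitClass.mpr (.rel _ _ ⟨Y, hY, hy, .inr hv⟩)
  exact eq_of_mem_of_mem_s7 (hσ.mapsTo hY) hY hv (hclass hvy)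

end OrbitFusion

end SRing

theorem stmt7_general (G G' : Type) [Group G] [Fintype G] [DecidableEq G]
    [Group G'] [Fintype G'] [DecidableEq G']
    (A B : SRing G) (B' : SRing G') (ξ : G → ℤ) (ξ' : G' → ℤ)
    (hB : A.SubringOf B ∧ B.MemFun ξ ∧
      ∀ C : SRing G, A.SubringOf C → C.MemFun ξ → B.SubringOf C)
    (φ : Finset G → Finset G')
    (ψ₁ ψ₂ : Finset G → Finset G')
    (h₁ : B.IsAlgIso B' ψ₁ ∧ SRing.ExtendsOn A B φ ψ₁ ∧ B.MapsElem ψ₁ ξ ξ')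
    (h₂ : B.IsAlgIso B' ψ₂ ∧ SRing.ExtendsOn A B φ ψ₂ ∧ B.MapsElem ψ₂ ξ ξ') :
    ∀ Y ∈ B.basicSets, ψ₁ Y = ψ₂ Y := by
  obtain ⟨hAB, hBξ, hBmin⟩ := hB
  obtain ⟨hψ₁, hext₁, hξ₁⟩ := h₁
  obtain ⟨hψ₂, hext₂, hξ₂⟩ := h₂
  set σ := Function.invFunOn ψ₂ (B.basicSets : Set (Finset G)) ∘ ψ₁
  have hσ : B.IsAlgIso B σ := hψ₁.comp hψ₂.symm
  have hψσ : ∀ U ∈ B.basicSets, ψ₂ (σ U) = ψ₁ U := fun U hU =>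
    Function.invFunOn_eq (hψ₂.exists_eq (hψ₁.mapsTo hU))
  have hAσ : ∀ X ∈ A.basicSets, ∀ U ∈ B.basicSets, σ U ⊆ X ↔ U ⊆ X := fun X hX U hU => by
    rw [hext₂.subset_iff hψ₂ hX (hσ.mapsTo hU), hψσ U hU, ← hext₁.subset_iff hψ₁ hX hU]
  have hξσ : ∀ U ∈ B.basicSets, ∀ u ∈ U, ∀ v ∈ σ U, ξ u = ξ v := fun U hU u hu v hv => by
    obtain ⟨w, hw⟩ := B'.nonempty_mem _ (hψ₁.mapsTo hU)
    exact (hξ₁ U hU u hu w hw).trans (hξ₂ _ (hσ.mapsTo hU) v hv w (hψσ U hU ▸ hw)).symm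
  have hBσ : B.SubringOf (SRing.orbitFusion hσ) :=
    hBmin _ (fun X hX => SRing.isASet_orbitFusion hσ (hAB X hX) (hAσ X hX))
      (SRing.memFun_orbitFusion hσ hBξ hξσ)
  intro Y hY
  rw [← hψσ Y hY, SRing.eq_self_of_subringOf_orbitFusion hσ hBσ hY]

/-- Given S-rings `A ⊆ B` over `G` and `A' ⊆ B'` over `G'`, where `B` is the smallest S-ring
containing `A` and `ξ ∈ ℤG` and `B'` is the smallest S-ring containing `A'` and `ξ' ∈ ℤG'`,
an algebraic isomorphism `φ : A → A'` admits at most one extension to an algebraic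
isomorphism `ψ : B → B'` with `ξ^ψ = ξ'`. -/
theorem stmt7 (G G' : Type) [Group G] [Fintype G] [DecidableEq G]
    [Group G'] [Fintype G'] [DecidableEq G']
    (A B : SRing G) (A' B' : SRing G') (ξ : G → ℤ) (ξ' : G' → ℤ)
    (hB : A.SubringOf B ∧ B.MemFun ξ ∧
      ∀ C : SRing G, A.SubringOf C → C.MemFun ξ → B.SubringOf C)
    (hB' : A'.SubringOf B' ∧ B'.MemFun ξ' ∧
      ∀ C : SRing G', A'.SubringOf C → C.MemFun ξ' → B'.SubringOf C)
    (φ : Finset G → Finset G') (hφ : A.IsAlgIso A' φ)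
    (ψ₁ ψ₂ : Finset G → Finset G')
    (h₁ : B.IsAlgIso B' ψ₁ ∧ SRing.ExtendsOn A B φ ψ₁ ∧ B.MapsElem ψ₁ ξ ξ')
    (h₂ : B.IsAlgIso B' ψ₂ ∧ SRing.ExtendsOn A B φ ψ₂ ∧ B.MapsElem ψ₂ ξ ξ') :
    ∀ Y ∈ B.basicSets, ψ₁ Y = ψ₂ Y :=
  stmt7_general G G' A B B' ξ ξ' hB φ ψ₁ ψ₂ h₁ h₂
end

section
/- Let p ≥ 5 be a prime and G a cyclic group of order 3p with subgroups G_3 and G_p of orders 3 and p. Let 𝒜 be a cyclotomic S-ring over G such that rk(𝒜_{G_p}) = 2 and 𝒜 ≠ 𝒜_{G_3} ⊗ 𝒜_{G_p}. Then 𝒜 = 𝒜_0, where 𝒜_0 = Cyc(W_0, G) and W_0 = {(α,β) ∈ Aut(G_3) × Aut(G_p) : α = id if and only if β ∈ M_0} ≤ Aut(G), M_0 being the subgroup of Aut(G_p) of index 2 (W_0 is the unique nontrivial subdirect product of Aut(G_3) and Aut(G_p)). -/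
open scoped Pointwise

/-- The subdirect product `W₀ = {(α,β) ∈ Aut(G₃) × Aut(G_p) : α = id ↔ β ∈ M₀}`, viewed
inside `Aut(G)` for `G` cyclic of order `3p` with subgroups `G₃`, `G_p` of orders `3`, `p`;
here `M₀`, the subgroup of `Aut(G_p)` of index 2, consists of the squares, i.e. the
automorphisms acting on `G_p` as `x ↦ x^(m²)`. -/
def W0 {G : Type*} [Group G] (G3 Gp : Subgroup G) (_p : ℕ) : Set (MulAut G) :=
  {f | (∀ x ∈ G3, f x = x) ↔ (∃ m : ℤ, ∀ x ∈ Gp, f x = x ^ (m * m))}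



private lemma st14_zpow_congr {G : Type*} [Group G] (w : G) (n : ℕ) (hw : w ^ n = 1)
    {m m' : ℤ} (h : (m : ZMod n) = (m' : ZMod n)) : w ^ m = w ^ m' := by
  obtain ⟨t, ht⟩ := (ZMod.intCast_eq_intCast_iff_dvd_sub m m' n).mp h
  have h1 : w ^ (n : ℤ) = 1 := by rw [zpow_natCast, hw]
  calc w ^ m = w ^ (m' - n * t) := by rw [← ht]; ring_nf
    _ = w ^ m' * (w ^ (n:ℤ)) ^ (-t) := by rw [← zpow_mul, ← zpow_add]; ring_nf
    _ = w ^ m' := by rw [h1, one_zpow, mul_one]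

private lemma st14_zpow_congr' {G : Type*} [Group G] {w : G} {n : ℕ} (hn : orderOf w = n)
    {m m' : ℤ} (h : w ^ m = w ^ m') : (m : ZMod n) = (m' : ZMod n) := by
  subst hn
  rw [ZMod.intCast_eq_intCast_iff]
  exact zpow_eq_zpow_iff_modEq.mp h

private lemma st14_nonsq_mul {p : ℕ} [Fact p.Prime] {a b : ZMod p} (ha : a ≠ 0) (hb : b ≠ 0)
    (hA : ¬ IsSquare a) (hB : ¬ IsSquare b) : IsSquare (a * b) := by
  have h1 := quadraticChar_neg_one_iff_not_isSquare.mpr hA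
  have h2 := quadraticChar_neg_one_iff_not_isSquare.mpr hB
  refine (quadraticChar_one_iff_isSquare (mul_ne_zero ha hb)).mp ?_
  rw [map_mul, h1, h2]; ring
open scoped Classical in
/-- A cyclotomic S-ring `𝒜` over a cyclic group of order `3p` (`p ≥ 5` prime) with
`rk(𝒜_{G_p}) = 2` and `𝒜 ≠ 𝒜_{G₃} ⊗ 𝒜_{G_p}` equals `𝒜₀ = Cyc(W₀, G)`. -/
theorem stmt14 (p : ℕ) (hp : p.Prime) (hp5 : 5 ≤ p)
    (G : Type) [CommGroup G] [Fintype G] [DecidableEq G]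
    (hG : IsCyclic G) (hcard : Fintype.card G = 3 * p)
    (G3 Gp : Subgroup G) (hG3 : Nat.card G3 = 3) (hGp : Nat.card Gp = p)
    (A : SRing G)
    -- 𝒜 is cyclotomic
    (hcyc : ∃ K : Subgroup (MulAut G),
      A.basicSets = Finset.univ.image (fun g : G =>
        Finset.univ.filter (fun x : G => ∃ k ∈ K, k g = x)))
    -- rk(𝒜_{G_p}) = 2
    (hrk : (A.basicSets.filter (fun X => X ⊆ Finset.univ.filter (· ∈ Gp))).card = 2)
    -- 𝒜 ≠ 𝒜_{G₃} ⊗ 𝒜_{G_p}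
    (hne : ¬ ∀ X ∈ A.basicSets, ∃ X₁ ∈ A.basicSets, ∃ X₂ ∈ A.basicSets,
      X₁ ⊆ Finset.univ.filter (· ∈ G3) ∧ X₂ ⊆ Finset.univ.filter (· ∈ Gp) ∧
      X = X₁ * X₂) :
    -- 𝒜 = 𝒜₀ = Cyc(W₀, G): the basic sets are the orbits of W₀
    A.basicSets = Finset.univ.image (fun g : G =>
      Finset.univ.filter (fun x : G => ∃ f ∈ W0 G3 Gp p, f g = x)) := by

  haveI hpF : Fact p.Prime := ⟨hp⟩
  haveI : NeZero p := ⟨hp.pos.ne'⟩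
  obtain ⟨K, hK⟩ := hcyc
  obtain ⟨z, hz⟩ := hG.exists_generator
  have hordz : orderOf z = 3 * p := by
    rw [orderOf_eq_card_of_forall_mem_zpowers hz, Nat.card_eq_fintype_card, hcard]
  -- every automorphism is a power map
  have hexp : ∀ f : MulAut G, ∃ m : ℤ, ∀ g : G, f g = g ^ m := by
    intro f
    obtain ⟨m, hm⟩ := Subgroup.mem_zpowers_iff.mp (hz (f z))
    refine ⟨m, fun g => ?_⟩
    obtain ⟨t, ht⟩ := Subgroup.mem_zpowers_iff.mp (hz g)
    rw [← ht, map_zpow f z t, ← hm, ← zpow_mul, mul_comm, zpow_mul]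
  set e : MulAut G → ℤ := fun f => (hexp f).choose with he_def
  have he : ∀ (f : MulAut G) (g : G), f g = g ^ (e f) := fun f => (hexp f).choose_spec
  -- subgroup characterizations
  have hcard3 : Fintype.card G3 = 3 := by rw [← Nat.card_eq_fintype_card, hG3]
  have hcardp : Fintype.card Gp = p := by rw [← Nat.card_eq_fintype_card, hGp]
  have hmemchar : ∀ (H : Subgroup G) (n : ℕ), 0 < n → Fintype.card H = n →
      ∀ x : G, x ∈ H ↔ x ^ n = 1 := by
    intro H n hn hcardH x
    have hsub : Finset.univ.filter (fun x : G => x ∈ H) ⊆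
        Finset.univ.filter (fun x : G => x ^ n = 1) := by
      intro y hy
      simp only [Finset.mem_filter, Finset.mem_univ, true_and] at hy ⊢
      have h1 : (⟨y, hy⟩ : H) ^ n = 1 := by rw [← hcardH]; exact pow_card_eq_one
      exact_mod_cast congrArg (Subgroup.subtype H) h1
    have hle := IsCyclic.card_pow_eq_one_le (α := G) (n := n) hn
    have hcf : (Finset.univ.filter (fun x : G => x ∈ H)).card = n := by
      rw [← hcardH]; exact (Fintype.card_subtype _).symm
    have hset := Finset.eq_of_subset_of_card_le hsub (by rw [hcf]; exact hle)
    constructor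
    · intro hx
      have : x ∈ Finset.univ.filter (fun x : G => x ^ n = 1) := by
        rw [← hset]; simp [hx]
      simpa using this
    · intro hx
      have : x ∈ Finset.univ.filter (fun x : G => x ∈ H) := by
        rw [hset]; simp [hx]
      simpa using this
  have hmem3 : ∀ x : G, x ∈ G3 ↔ x ^ (3:ℕ) = 1 := hmemchar G3 3 (by norm_num) hcard3
  have hmemp : ∀ x : G, x ∈ Gp ↔ x ^ p = 1 := hmemchar Gp p hp.pos hcardp
  -- generators of G3 and Gp
  set a : G := z ^ p with ha_def
  set b : G := z ^ 3 with hb_def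
  have horda : orderOf a = 3 := by
    rw [ha_def, orderOf_pow, hordz, Nat.gcd_eq_right (dvd_mul_left p 3),
      Nat.mul_div_cancel _ hp.pos]
  have hordb : orderOf b = p := by
    rw [hb_def, orderOf_pow, hordz, Nat.gcd_eq_right (dvd_mul_right 3 p),
      Nat.mul_div_cancel_left _ (by norm_num)]
  have ha3 : a ^ (3:ℕ) = 1 := by rw [← horda]; exact pow_orderOf_eq_one a
  have hbp : b ^ p = 1 := by rw [← hordb]; exact pow_orderOf_eq_one b
  have haG3 : a ∈ G3 := (hmem3 a).mpr ha3
  have hbGp : b ∈ Gp := (hmemp b).mpr hbp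
  -- translations of the defining conditions of W0
  have h3 : ∀ f : MulAut G, (∀ x ∈ G3, f x = x) ↔ ((e f : ZMod 3) = 1) := by
    intro f
    constructor
    · intro hfx
      have h := hfx a haG3
      rw [he f a] at h
      have h2 : a ^ (e f) = a ^ (1:ℤ) := by rw [zpow_one]; exact h
      simpa using st14_zpow_congr' horda h2
    · intro hef x hx
      have hx3 : x ^ (3:ℕ) = 1 := (hmem3 x).mp hx
      have := st14_zpow_congr x 3 hx3 (m := e f) (m' := 1) (by exact_mod_cast hef)
      rw [he f x, this, zpow_one]
  have hsq : ∀ f : MulAut G,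
      (∃ m : ℤ, ∀ x ∈ Gp, f x = x ^ (m*m)) ↔ IsSquare ((e f : ZMod p)) := by
    intro f
    constructor
    · rintro ⟨m, hm⟩
      have h := hm b hbGp
      rw [he f b] at h
      have h2 := st14_zpow_congr' hordb h
      exact ⟨(m : ZMod p), by rw [h2]; push_cast; ring⟩
    · rintro ⟨c, hc⟩
      obtain ⟨m, hm⟩ := ZMod.intCast_surjective c
      refine ⟨m, fun x hx => ?_⟩
      have hxp : x ^ p = 1 := (hmemp x).mp hx
      rw [he f x]
      exact st14_zpow_congr x p hxp (by rw [hc, ← hm]; push_cast; ring)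
  -- exponents are units
  have hunit : ∀ (w : G) (n : ℕ), orderOf w = n → 2 ≤ n → ∀ f : MulAut G,
      (e f : ZMod n) ≠ 0 := by
    intro w n hw hn f h0
    have hwn : w ^ n = 1 := by rw [← hw]; exact pow_orderOf_eq_one w
    have : w ^ (e f) = w ^ (0:ℤ) := st14_zpow_congr w n hwn (by exact_mod_cast h0)
    rw [zpow_zero, ← he f w] at this
    have hw1 : w = 1 := f.injective (by rw [this, map_one])
    rw [hw1, orderOf_one] at hw
    omega
  have hunit3 : ∀ f : MulAut G, (e f : ZMod 3) ≠ 0 := hunit a 3 horda (by norm_num)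
  have hunitp : ∀ f : MulAut G, (e f : ZMod p) ≠ 0 := hunit b p hordb (by omega)
  -- multiplicativity of exponents
  have hmulgen : ∀ (w : G) (n : ℕ), orderOf w = n → ∀ f k : MulAut G,
      (e (f * k) : ZMod n) = (e f : ZMod n) * (e k : ZMod n) := by
    intro w n hw f k
    have h1 : (f * k) w = w ^ (e (f * k)) := he (f * k) w
    have h2 : (f * k) w = w ^ (e f * e k) := by
      show f (k w) = _
      rw [he k w, map_zpow, he f w, ← zpow_mul, mul_comm]
    have := st14_zpow_congr' hw (h1.symm.trans h2)
    rw [this]; push_cast; ring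
  have hmul3 : ∀ f k : MulAut G,
      (e (f * k) : ZMod 3) = (e f : ZMod 3) * (e k : ZMod 3) := hmulgen a 3 horda
  have hmulp : ∀ f k : MulAut G,
      (e (f * k) : ZMod p) = (e f : ZMod p) * (e k : ZMod p) := hmulgen b p hordb
  have honegen : ∀ (w : G) (n : ℕ), orderOf w = n → (e (1 : MulAut G) : ZMod n) = 1 := by
    intro w n hw
    have h1 : w ^ (e (1 : MulAut G)) = w ^ (1:ℤ) := by
      rw [zpow_one, ← he 1 w]; rfl
    simpa using st14_zpow_congr' hw h1
  have hinv3 : ∀ f : MulAut G, (e f⁻¹ : ZMod 3) * (e f : ZMod 3) = 1 := by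
    intro f
    rw [← hmul3 f⁻¹ f, inv_mul_cancel]
    exact honegen a 3 horda
  have hinvp : ∀ f : MulAut G, (e f⁻¹ : ZMod p) * (e f : ZMod p) = 1 := by
    intro f
    rw [← hmulp f⁻¹ f, inv_mul_cancel]
    exact honegen b p hordb
  -- automorphisms are determined by their exponents mod 3 and mod p
  have hcop : IsCoprime (3:ℤ) (p:ℤ) := by
    rw [Int.isCoprime_iff_gcd_eq_one]
    have : Nat.Coprime 3 p := (Nat.coprime_primes (by norm_num) hp).mpr (by omega)
    exact_mod_cast this
  have hext : ∀ f k : MulAut G, (e f : ZMod 3) = (e k : ZMod 3) →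
      (e f : ZMod p) = (e k : ZMod p) → f = k := by
    intro f k h3' hp'
    have d3 : (3:ℤ) ∣ e k - e f := by
      exact_mod_cast (ZMod.intCast_eq_intCast_iff_dvd_sub _ _ 3).mp h3'
    have dp : (p:ℤ) ∣ e k - e f := (ZMod.intCast_eq_intCast_iff_dvd_sub _ _ p).mp hp'
    have d3p : ((3*p : ℕ) : ℤ) ∣ e k - e f := by
      push_cast
      exact hcop.mul_dvd d3 dp
    have hcast : (e f : ZMod (3*p)) = (e k : ZMod (3*p)) :=
      (ZMod.intCast_eq_intCast_iff_dvd_sub _ _ (3*p)).mpr d3p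
    apply DFunLike.ext
    intro g
    have hg : g ^ (3*p) = 1 := by rw [← hcard]; exact pow_card_eq_one
    rw [he f g, he k g]
    exact st14_zpow_congr g (3*p) hg hcast
  -- orbit machinery
  have hK' : A.basicSets = Finset.univ.image
      (fun g : G => Finset.univ.filter (fun x : G => ∃ k ∈ K, k g = x)) := hK
  set orb : G → Finset G :=
    (fun g : G => Finset.univ.filter (fun x : G => ∃ k ∈ K, k g = x)) with horb_def
  have horb : ∀ g x : G, x ∈ orb g ↔ ∃ k ∈ K, k g = x := by
    intro g x
    rw [horb_def, Finset.mem_filter]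
    simp
  have horb_basic : ∀ g : G, orb g ∈ A.basicSets := by
    intro g
    rw [hK']
    exact Finset.mem_image_of_mem _ (Finset.mem_univ g)
  have hself : ∀ g : G, g ∈ orb g := by
    intro g
    exact (horb g g).mpr ⟨1, K.one_mem, rfl⟩
  -- transitivity on Gp \ {1} from hrk
  have htrans : ∀ y : ZMod p, y ≠ 0 → ∃ k ∈ K, (e k : ZMod p) = y := by
    intro y hy
    set c : G := b ^ (y.val) with hc_def
    have hcGp : c ∈ Gp := pow_mem hbGp _
    have hyval : y.val ≠ 0 := fun h => hy (by rwa [ZMod.val_eq_zero] at h)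
    have hcne : c ≠ 1 := by
      intro h
      have hd := orderOf_dvd_of_pow_eq_one h
      rw [hordb] at hd
      have := Nat.le_of_dvd (Nat.pos_of_ne_zero hyval) hd
      have := ZMod.val_lt y
      omega
    have hbne : b ≠ 1 := by
      intro h
      rw [h, orderOf_one] at hordb
      omega
    have hmemS : ∀ g : G, g ∈ Gp →
        orb g ∈ A.basicSets.filter (fun X => X ⊆ Finset.univ.filter (· ∈ Gp)) := by
      intro g hg
      refine Finset.mem_filter.mpr ⟨horb_basic g, ?_⟩
      intro x hx
      obtain ⟨k, hkK, rfl⟩ := (horb g x).mp hx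
      simp only [Finset.mem_filter, Finset.mem_univ, true_and]
      rw [he k g]
      exact Subgroup.zpow_mem Gp hg _
    have h1mem : ∀ g : G, g ∈ Gp → g ≠ 1 → (1 : G) ∉ orb g := by
      intro g hg hgne h1
      obtain ⟨k, hkK, hk1⟩ := (horb g 1).mp h1
      exact hgne (k.injective (by rw [hk1, map_one]))
    obtain ⟨X, Y, hXY, hS⟩ := Finset.card_eq_two.mp hrk
    have hob := hmemS b hbGp
    have hoc := hmemS c hcGp
    have ho1 := hmemS 1 (one_mem Gp)
    rw [hS, Finset.mem_insert, Finset.mem_singleton] at hob hoc ho1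
    have hbc : orb c = orb b := by
      have hb1 : orb b ≠ orb 1 := by
        intro h
        exact h1mem b hbGp hbne (h ▸ hself 1)
      have hc1 : orb c ≠ orb 1 := by
        intro h
        exact h1mem c hcGp hcne (h ▸ hself 1)
      rcases ho1 with h1X | h1Y <;> rcases hob with hbX | hbY <;> rcases hoc with hcX | hcY <;>
        first
          | (exfalso; apply hb1; omega)
          | (rw [hcX] <;> rw [hbX]) 
          | skip
      all_goals try rw [hcX, hbX]
      all_goals try rw [hcY, hbY]
      all_goals try (exfalso; apply hb1; rw [hbX, h1X])
      all_goals try (exfalso; apply hb1; rw [hbY, h1Y])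
      all_goals try (exfalso; apply hc1; rw [hcX, h1X])
      all_goals try (exfalso; apply hc1; rw [hcY, h1Y])
    have hcmem : c ∈ orb b := hbc ▸ hself c
    obtain ⟨k, hkK, hkbc⟩ := (horb b c).mp hcmem
    refine ⟨k, hkK, ?_⟩
    have hzp : b ^ (e k) = b ^ ((y.val : ℤ)) := by
      rw [← he k b, hkbc, hc_def, zpow_natCast]
    have := st14_zpow_congr' hordb hzp
    rw [this]
    push_cast
    simp [ZMod.natCast_val, ZMod.cast_id]
  -- if exponent pairs form a product set, A is a tensor product: contradiction
  have hprod : ¬ (∀ k1 ∈ K, ∀ k2 ∈ K, ∃ k3 ∈ K,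
      (e k3 : ZMod 3) = (e k1 : ZMod 3) ∧ (e k3 : ZMod p) = (e k2 : ZMod p)) := by
    intro hEp
    apply hne
    intro X hX
    rw [hK'] at hX
    obtain ⟨g, -, rfl⟩ := Finset.mem_image.mp hX
    obtain ⟨u, v, huv⟩ : ∃ u v : ℤ, u * 3 + v * p = 1 := hcop
    set α : G := g ^ ((p:ℤ) * v) with hα_def
    set β : G := g ^ ((3:ℤ) * u) with hβ_def
    have hg3p : g ^ ((3*p : ℕ) : ℤ) = 1 := by
      rw [zpow_natCast, ← hcard]
      exact pow_card_eq_one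
    have hα3 : α ^ (3:ℕ) = 1 := by
      rw [hα_def, ← zpow_natCast, ← zpow_mul]
      have h1 : (p:ℤ) * v * (3:ℕ) = ((3*p : ℕ) : ℤ) * v := by push_cast; ring
      rw [h1, zpow_mul, hg3p, one_zpow]
    have hβp : β ^ p = 1 := by
      rw [hβ_def, ← zpow_natCast, ← zpow_mul]
      have h1 : (3:ℤ) * u * (p:ℕ) = ((3*p : ℕ) : ℤ) * u := by push_cast; ring
      rw [h1, zpow_mul, hg3p, one_zpow]
    have hαβ : α * β = g := by
      rw [hα_def, hβ_def, ← zpow_add]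
      have h1 : (p:ℤ) * v + 3 * u = 1 := by push_cast at huv ⊢; linarith
      rw [h1, zpow_one]
    refine ⟨orb α, horb_basic α, orb β, horb_basic β, ?_, ?_, ?_⟩
    · intro x hx
      obtain ⟨k, hkK, rfl⟩ := (horb α x).mp hx
      simp only [Finset.mem_filter, Finset.mem_univ, true_and]
      rw [he k α]
      exact Subgroup.zpow_mem G3 ((hmem3 α).mpr hα3) _
    · intro x hx
      obtain ⟨k, hkK, rfl⟩ := (horb β x).mp hx
      simp only [Finset.mem_filter, Finset.mem_univ, true_and]
      rw [he k β]
      exact Subgroup.zpow_mem Gp ((hmemp β).mpr hβp) _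
    · ext x
      constructor
      · intro hx
        obtain ⟨k, hkK, rfl⟩ := (horb g x).mp hx
        have hsplit : k g = (α ^ (e k)) * (β ^ (e k)) := by
          rw [he k g, ← hαβ, mul_zpow]
        rw [hsplit]
        exact Finset.mul_mem_mul ((horb α _).mpr ⟨k, hkK, he k α⟩)
          ((horb β _).mpr ⟨k, hkK, he k β⟩)
      · intro hx
        obtain ⟨x1, hx1, x2, hx2, rfl⟩ := Finset.mem_mul.mp hx
        obtain ⟨k1, hk1K, rfl⟩ := (horb α x1).mp hx1
        obtain ⟨k2, hk2K, rfl⟩ := (horb β x2).mp hx2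
        obtain ⟨k3, hk3K, hk33, hk3p⟩ := hEp k1 hk1K k2 hk2K
        refine (horb g _).mpr ⟨k3, hk3K, ?_⟩
        rw [he k3 g, ← hαβ, mul_zpow, he k1 α, he k2 β]
        congr 1
        · exact st14_zpow_congr α 3 hα3 hk33
        · exact st14_zpow_congr β p hβp hk3p
  -- there is an element inverting G3
  have hK2 : ∃ k ∈ K, (e k : ZMod 3) = 2 := by
    by_contra h
    push_neg at h
    apply hprod
    intro k1 hk1 k2 hk2
    have e1 : ∀ k : MulAut G, k ∈ K → (e k : ZMod 3) = 1 := by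
      intro k hk
      have h0 := hunit3 k
      have h2 := h k hk
      have hx : ∀ x : ZMod 3, x ≠ 0 → x ≠ 2 → x = 1 := by decide
      exact hx _ h0 h2
    exact ⟨k2, hk2, by rw [e1 k2 hk2, e1 k1 hk1], rfl⟩
  -- no element of type (2,1)
  have hno21 : ¬ ∃ k ∈ K, (e k : ZMod 3) = 2 ∧ (e k : ZMod p) = 1 := by
    rintro ⟨k21, hk21K, h21a, h21b⟩
    apply hprod
    intro k1 hk1 k2 hk2
    by_cases hc : (e k1 : ZMod 3) = (e k2 : ZMod 3)
    · exact ⟨k2, hk2, hc.symm, rfl⟩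
    · refine ⟨k21 * k2, K.mul_mem hk21K hk2, ?_, ?_⟩
      · rw [hmul3, h21a]
        have h01 := hunit3 k1
        have h02 := hunit3 k2
        have hx : ∀ x y : ZMod 3, x ≠ y → x ≠ 0 → y ≠ 0 → 2 * y = x := by decide
        exact hx _ _ hc h01 h02
      · rw [hmulp, h21b, one_mul]
  -- squares are realized with trivial G3-part
  have hsqmem : ∀ y : ZMod p, y ≠ 0 → IsSquare y →
      ∃ k ∈ K, (e k : ZMod 3) = 1 ∧ (e k : ZMod p) = y := by
    rintro y hy ⟨c, rfl⟩
    have hc0 : c ≠ 0 := by rintro rfl; simp at hy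
    obtain ⟨k, hkK, hkc⟩ := htrans c hc0
    refine ⟨k * k, K.mul_mem hkK hkK, ?_, ?_⟩
    · rw [hmul3]
      have h0 := hunit3 k
      have hx : ∀ x : ZMod 3, x ≠ 0 → x * x = 1 := by decide
      exact hx _ h0
    · rw [hmulp, hkc]
  -- (1, y) ∈ E implies y is a square
  have h1sq : ∀ k : MulAut G, k ∈ K → (e k : ZMod 3) = 1 → IsSquare (e k : ZMod p) := by
    intro k hkK h1
    by_contra hns
    obtain ⟨k2, hk2K, h2⟩ := hK2
    -- produce k' ∈ K with G3-part 2 and square Gp-part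
    obtain ⟨k', hk'K, hk'3, hk'sq⟩ :
        ∃ k' ∈ K, (e k' : ZMod 3) = 2 ∧ IsSquare (e k' : ZMod p) := by
      by_cases hw : IsSquare (e k2 : ZMod p)
      · exact ⟨k2, hk2K, h2, hw⟩
      · refine ⟨k2 * k, K.mul_mem hk2K hkK, ?_, ?_⟩
        · rw [hmul3, h2, h1, mul_one]
        · rw [hmulp]
          exact st14_nonsq_mul (hunitp k2) (hunitp k) hw hns
    obtain ⟨k'', hk''K, h''1, h''y⟩ := hsqmem _ (hunitp k') hk'sq
    apply hno21
    refine ⟨k' * k''⁻¹, K.mul_mem hk'K (K.inv_mem hk''K), ?_, ?_⟩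
    · rw [hmul3, hk'3]
      have := hinv3 k''
      rw [h''1, mul_one] at this
      rw [this, mul_one]
    · rw [hmulp]
      have := hinvp k''
      rw [h''y] at this
      rw [mul_comm]
      exact this
  -- conclusion: K and W0 coincide
  have hKW : ∀ f : MulAut G, f ∈ K ↔ f ∈ W0 G3 Gp p := by
    intro f
    have hW : f ∈ W0 G3 Gp p ↔ (((e f : ZMod 3) = 1) ↔ IsSquare (e f : ZMod p)) := by
      rw [W0, Set.mem_setOf_eq, h3 f, hsq f]
    rw [hW]
    constructor
    · intro hfK
      by_cases h1 : (e f : ZMod 3) = 1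
      · exact iff_of_true h1 (h1sq f hfK h1)
      · have h2 : (e f : ZMod 3) = 2 := by
          have h0 := hunit3 f
          have hx : ∀ x : ZMod 3, x ≠ 1 → x ≠ 0 → x = 2 := by decide
          exact hx _ h1 h0
        refine iff_of_false h1 ?_
        intro hsqf
        obtain ⟨k'', hk''K, h''1, h''y⟩ := hsqmem _ (hunitp f) hsqf
        apply hno21
        refine ⟨f * k''⁻¹, K.mul_mem hfK (K.inv_mem hk''K), ?_, ?_⟩
        · rw [hmul3, h2]
          have := hinv3 k''
          rw [h''1, mul_one] at this
          rw [this, mul_one]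
        · rw [hmulp]
          have := hinvp k''
          rw [h''y] at this
          rw [mul_comm]
          exact this
    · intro hiff
      by_cases h1 : (e f : ZMod 3) = 1
      · obtain ⟨k, hkK, hk3, hkp⟩ := hsqmem _ (hunitp f) (hiff.mp h1)
        have : f = k := hext f k (by rw [h1, hk3]) (by rw [hkp])
        rw [this]; exact hkK
      · have h2 : (e f : ZMod 3) = 2 := by
          have h0 := hunit3 f
          have hx : ∀ x : ZMod 3, x ≠ 1 → x ≠ 0 → x = 2 := by decide
          exact hx _ h1 h0
        obtain ⟨k, hkK, hkp⟩ := htrans (e f : ZMod p) (hunitp f)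
        have hk3 : (e k : ZMod 3) = 2 := by
          by_contra h
          have hk1 : (e k : ZMod 3) = 1 := by
            have h0 := hunit3 k
            have hx : ∀ x : ZMod 3, x ≠ 2 → x ≠ 0 → x = 1 := by decide
            exact hx _ h h0
          have hsqk := h1sq k hkK hk1
          rw [hkp] at hsqk
          exact h1 (hiff.mpr hsqk)
        have : f = k := hext f k (by rw [h2, hk3]) (by rw [hkp])
        rw [this]; exact hkK
  -- finish: the orbits of K are the orbits of W0
  rw [hK']
  apply Finset.image_congr
  intro g _
  apply Finset.filter_congr
  intro x _
  constructor
  · rintro ⟨k, hkK, hkx⟩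
    exact ⟨k, (hKW k).mp hkK, hkx⟩
  · rintro ⟨f, hfW, hfx⟩
    exact ⟨f, (hKW f).mpr hfW, hfx⟩
end
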